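/- arXiv:1204.4708 — 4 statements merged into one kernel-verified Lean document; each statement's English description precedes it below -/
import Mathlib

section
/- Let c > 0 and r ∈ ℝ be fixed, and for real d define F(d,c) = (1 − d/2) + √((1 − d/2)² + c) and G(d,c) = −d + √(d² + 2c). Then the ratio of the two greedy merge-time proposals, (F(d,c)/2 − r/2) / (G(d,c)/2 − r/2), tends to 1 as d → ∞. (Lemma 1, part 1: Δ_{k,C}/Δ^{prev}_{k,C} → 1 as the data dimension d → ∞.) -/
open Real Filter

/-! Both proposals are of the form `√(x² + a) - x` (`F` with `x = d/2 - 1`, `a = c`; `G` with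
`x = d`, `a = 2c`), and `x (√(x² + a) - x) = a / (√(1 + a / x²) + 1) → a / 2` as `x → ∞`. Hence `d F(d, c) → c` and `d G(d, c) → c`:
for `r = 0` the ratio is `(d F) / (d G) → c / c`, and for `r ≠ 0` both proposals tend to `0`, so
the ratio tends to `(-r/2) / (-r/2)`. -/

/-- The corrected greedy merge-time proposal numerator. -/
noncomputable def F (d c : ℝ) : ℝ := (1 - d / 2) + Real.sqrt ((1 - d / 2) ^ 2 + c)

/-- The greedy merge-time proposal of Teh et al. -/
noncomputable def G (d c : ℝ) : ℝ := -d + Real.sqrt (d ^ 2 + 2 * c)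

lemma mul_sqrt_sq_add_sub_self_eq {c x : ℝ} (hx : 0 < x) (h : 0 ≤ 1 + c / x ^ 2) :
    x * (√(x ^ 2 + c) - x) = c / (√(1 + c / x ^ 2) + 1) := by
  have hs : √(1 + c / x ^ 2) ^ 2 = 1 + c / x ^ 2 := sq_sqrt h
  have hsqrt : √(x ^ 2 + c) = x * √(1 + c / x ^ 2) := by
    rw [← sqrt_sq hx.le, ← sqrt_mul (sq_nonneg x), sqrt_sq hx.le]
    congr 1
    field_simp
  have hc : x ^ 2 * (c / x ^ 2) = c := by field_simp
  rw [hsqrt, eq_div_iff (by positivity)]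
  linear_combination x ^ 2 * hs + hc

lemma tendsto_mul_sqrt_sq_add_sub_self (c : ℝ) :
    Tendsto (fun x : ℝ => x * (√(x ^ 2 + c) - x)) atTop (nhds (c / 2)) := by
  have hquot : Tendsto (fun x : ℝ => 1 + c / x ^ 2) atTop (nhds 1) := by
    simpa using ((tendsto_const_nhds (x := c)).div_atTop
      (tendsto_pow_atTop (α := ℝ) two_ne_zero)).const_add 1
  have hlim : Tendsto (fun x : ℝ => c / (√(1 + c / x ^ 2) + 1)) atTop (nhds (c / 2)) := by
    have hden := ((continuous_sqrt.tendsto 1).comp hquot).add_const 1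
    rw [sqrt_one, one_add_one_eq_two] at hden
    exact (tendsto_const_nhds (x := c)).div hden two_ne_zero
  refine hlim.congr' ?_
  filter_upwards [eventually_gt_atTop 0, hquot.eventually (lt_mem_nhds one_pos)]
    with x hx hpos
  exact (mul_sqrt_sq_add_sub_self_eq hx (by linarith)).symm

lemma tendsto_sqrt_sq_add_sub_self (c : ℝ) :
    Tendsto (fun x : ℝ => √(x ^ 2 + c) - x) atTop (nhds 0) := by
  have hlim := (tendsto_mul_sqrt_sq_add_sub_self c).mul tendsto_inv_atTop_zero
  rw [mul_zero] at hlim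
  refine hlim.congr' ?_
  filter_upwards [eventually_ne_atTop 0] with x hx
  field_simp

lemma F_eq_sqrt_sq_add_sub (d c : ℝ) : F d c = √((d / 2 - 1) ^ 2 + c) - (d / 2 - 1) := by
  rw [F, show (1 - d / 2) ^ 2 = (d / 2 - 1) ^ 2 by ring]
  ring

lemma G_eq_sqrt_sq_add_sub (d c : ℝ) : G d c = √(d ^ 2 + 2 * c) - d := by
  rw [G]
  ring

lemma tendsto_half_sub_one_atTop : Tendsto (fun d : ℝ => d / 2 - 1) atTop atTop :=
  tendsto_atTop_atTop.2 fun b => ⟨2 * b + 2, fun d hd => by linarith⟩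

lemma tendsto_F_mul_self (c : ℝ) : Tendsto (fun d => F d c * d) atTop (nhds c) := by
  have hlim := (((tendsto_mul_sqrt_sq_add_sub_self c).comp tendsto_half_sub_one_atTop).const_mul
    2).add (((tendsto_sqrt_sq_add_sub_self c).comp tendsto_half_sub_one_atTop).const_mul 2)
  convert hlim using 2 with d
  · simp only [F_eq_sqrt_sq_add_sub, Function.comp_apply]
    ring
  · ring

lemma tendsto_G_mul_self (c : ℝ) : Tendsto (fun d => G d c * d) atTop (nhds c) := by
  have hlim := tendsto_mul_sqrt_sq_add_sub_self (2 * c)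
  rw [mul_div_cancel_left₀ c two_ne_zero] at hlim
  simpa only [G_eq_sqrt_sq_add_sub, mul_comm] using hlim

lemma tendsto_F (c : ℝ) : Tendsto (fun d => F d c) atTop (nhds 0) := by
  simpa only [F_eq_sqrt_sq_add_sub, Function.comp_def] using
    (tendsto_sqrt_sq_add_sub_self c).comp tendsto_half_sub_one_atTop

lemma tendsto_G (c : ℝ) : Tendsto (fun d => G d c) atTop (nhds 0) := by
  simpa only [G_eq_sqrt_sq_add_sub] using tendsto_sqrt_sq_add_sub_self (2 * c)

/-- Lemma 1, part 1: the ratio of the two greedy merge-time proposals tends to 1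
as the data dimension `d → ∞`. -/
theorem ratio_tendsto_one (c r : ℝ) (hc : 0 < c) :
    Tendsto (fun d : ℝ => (F d c / 2 - r / 2) / (G d c / 2 - r / 2)) atTop (nhds 1) := by
  rcases eq_or_ne r 0 with rfl | hr
  · have hlim := (tendsto_F_mul_self c).div (tendsto_G_mul_self c) hc.ne'
    rw [div_self hc.ne'] at hlim
    refine hlim.congr' ?_
    filter_upwards [eventually_ne_atTop 0] with d hd
    rw [Pi.div_apply, mul_div_mul_right _ _ hd]
    ring
  · have hden : (0 : ℝ) / 2 - r / 2 ≠ 0 := by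
      contrapose! hr
      linarith
    have hlim := (((tendsto_F c).div_const 2).sub_const (r / 2)).div
      (((tendsto_G c).div_const 2).sub_const (r / 2)) hden
    rwa [div_self hden] at hlim
end

section
/- For every real d ≥ 1 and every c > 0, with F(d,c) = (1 − d/2) + √((1 − d/2)² + c) and G(d,c) = −d + √(d² + 2c), one has F(d,c) = G(d,c) if and only if c = 4(d + 2). Consequently the corrected greedy merge-time proposal Δ_{k,C} coincides with the proposal Δ^{prev}_{k,C} of Teh et al. exactly when λε_{k−1,C} = 4(d+2), so Δ^{prev}_{k,C} is a biased estimate of the maximum a-posteriori merge time for almost every value of λε_{k−1,C}. -/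
/-- The two greedy merge-time proposals coincide exactly when `c = 4 * (d + 2)`,
so Teh et al.'s proposal is a biased estimate of the MAP merge time for
almost every value of `c = λ * ε`. -/
theorem proposals_eq_iff (d c : ℝ) (hd : 1 ≤ d) (hc : 0 < c) :
    F d c = G d c ↔ c = 4 * (d + 2) := by
  have h1 : (0:ℝ) ≤ (1 - d / 2) ^ 2 + c := by positivity
  have h2 : (0:ℝ) ≤ d ^ 2 + 2 * c := by positivity
  set a := Real.sqrt ((1 - d / 2) ^ 2 + c) with ha
  set b := Real.sqrt (d ^ 2 + 2 * c) with hb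
  have ha2 : a ^ 2 = (1 - d / 2) ^ 2 + c := Real.sq_sqrt h1
  have hb2 : b ^ 2 = d ^ 2 + 2 * c := Real.sq_sqrt h2
  have ha0 : 0 ≤ a := Real.sqrt_nonneg _
  have hb0 : 0 ≤ b := Real.sqrt_nonneg _
  constructor
  · intro h
    have h' : b = a + 1 + d / 2 := by
      have : (1 - d / 2) + a = -d + b := h
      linarith
    have hsq : b ^ 2 = (a + 1 + d / 2) ^ 2 := by rw [h']
    have hA : (d + 2) * a = d ^ 2 / 2 + c - 2 := by nlinarith
    have hA2 : (d + 2) ^ 2 * a ^ 2 = (d ^ 2 / 2 + c - 2) ^ 2 := by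
      rw [← mul_pow, hA]
    rw [ha2] at hA2
    have key : c * (4 * d + 8 - c) = 0 := by nlinarith [hA2]
    rcases mul_eq_zero.mp key with h0 | h0
    · exact absurd h0 (ne_of_gt hc)
    · linarith
  · intro h
    subst h
    have e1 : (1 - d / 2) ^ 2 + 4 * (d + 2) = (d / 2 + 3) ^ 2 := by ring
    have e2 : d ^ 2 + 2 * (4 * (d + 2)) = (d + 4) ^ 2 := by ring
    have sa : a = d / 2 + 3 := by
      rw [ha, e1, Real.sqrt_sq (by linarith)]
    have sb : b = d + 4 := by
      rw [hb, e2, Real.sqrt_sq (by linarith)]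
    show (1 - d / 2) + a = -d + b
    rw [sa, sb]; ring
end

section
/- For every real d ≥ 1 and every c > 0, with F(d,c) = (1 − d/2) + √((1 − d/2)² + c) and G(d,c) = −d + √(d² + 2c), one has F(d,c) < G(d,c) if and only if c > 4(d + 2) (and F(d,c) > G(d,c) if and only if 0 < c < 4(d+2)). That is, the two greedy merge-time proposals cross exactly once, at c = 4(d+2). -/
lemma F_lt_G_of (d c : ℝ) (hd : 1 ≤ d) (hc : 0 < c) (h : 4 * (d + 2) < c) :
    F d c < G d c := by
  set s := Real.sqrt ((1 - d / 2) ^ 2 + c) with hsdef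
  set t := Real.sqrt (d ^ 2 + 2 * c) with htdef
  have hsn : 0 ≤ s := Real.sqrt_nonneg _
  have htn : 0 ≤ t := Real.sqrt_nonneg _
  have hs : s ^ 2 = (1 - d / 2) ^ 2 + c := Real.sq_sqrt (by positivity)
  have ht : t ^ 2 = d ^ 2 + 2 * c := Real.sq_sqrt (by positivity)
  -- step A : (2+d) * s < c + d^2/2 - 2
  have hA : (2 + d) * s < c + d ^ 2 / 2 - 2 := by
    have hrpos : 0 < c + d ^ 2 / 2 - 2 := by nlinarith
    have hsq : ((2 + d) * s) ^ 2 < (c + d ^ 2 / 2 - 2) ^ 2 := by nlinarith [hs, mul_pos hc (by linarith : (0:ℝ) < c - 4 * (d + 2))]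
    exact lt_of_pow_lt_pow_left₀ 2 hrpos.le hsq
  -- step B : s + 1 + d/2 < t
  have hB : s + 1 + d / 2 < t := by
    have hsq : (s + 1 + d / 2) ^ 2 < t ^ 2 := by nlinarith [hs, ht, hA]
    exact lt_of_pow_lt_pow_left₀ 2 htn hsq
  unfold F G
  linarith

lemma G_lt_F_of (d c : ℝ) (hd : 1 ≤ d) (hc : 0 < c) (h : c < 4 * (d + 2)) :
    G d c < F d c := by
  set s := Real.sqrt ((1 - d / 2) ^ 2 + c) with hsdef
  set t := Real.sqrt (d ^ 2 + 2 * c) with htdef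
  have htn : 0 ≤ t := Real.sqrt_nonneg _
  have hspos : 0 < s := Real.sqrt_pos.mpr (by positivity)
  have hs : s ^ 2 = (1 - d / 2) ^ 2 + c := Real.sq_sqrt (by positivity)
  have ht : t ^ 2 = d ^ 2 + 2 * c := Real.sq_sqrt (by positivity)
  have hA : c + d ^ 2 / 2 - 2 < (2 + d) * s := by
    rcases le_or_gt (c + d ^ 2 / 2 - 2) 0 with h0 | h0
    · have : 0 < (2 + d) * s := mul_pos (by linarith) hspos
      linarith
    · have hsq : (c + d ^ 2 / 2 - 2) ^ 2 < ((2 + d) * s) ^ 2 := by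
        nlinarith [hs, mul_pos hc (by linarith : (0:ℝ) < 4 * (d + 2) - c)]
      exact lt_of_pow_lt_pow_left₀ 2 (by positivity) hsq
  have hB : t < s + 1 + d / 2 := by
    have hsq : t ^ 2 < (s + 1 + d / 2) ^ 2 := by nlinarith [hs, ht, hA, hspos]
    exact lt_of_pow_lt_pow_left₀ 2 (by nlinarith) hsq
  unfold F G
  linarith

lemma F_eq_G_of (d c : ℝ) (hd : 1 ≤ d) (h : c = 4 * (d + 2)) :
    F d c = G d c := by
  have hs : (1 - d / 2) ^ 2 + c = (d / 2 + 3) ^ 2 := by rw [h]; ring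
  have ht : d ^ 2 + 2 * c = (d + 4) ^ 2 := by rw [h]; ring
  unfold F G
  rw [hs, ht, Real.sqrt_sq (by linarith), Real.sqrt_sq (by linarith)]
  ring

/-- The two greedy merge-time proposals cross exactly once, at `c = 4 * (d + 2)`:
`F < G` iff `c > 4(d+2)`, and `F > G` iff `0 < c < 4(d+2)`. -/
theorem proposals_cross_once (d c : ℝ) (hd : 1 ≤ d) (hc : 0 < c) :
    (F d c < G d c ↔ 4 * (d + 2) < c) ∧ (G d c < F d c ↔ c < 4 * (d + 2)) := by
  constructor
  · constructor
    · intro hlt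
      rcases lt_trichotomy (4 * (d + 2)) c with h | h | h
      · exact h
      · exact absurd hlt (by rw [F_eq_G_of d c hd h.symm]; exact lt_irrefl _)
      · exact absurd hlt (not_lt.mpr (G_lt_F_of d c hd hc h).le)
    · exact F_lt_G_of d c hd hc
  · constructor
    · intro hlt
      rcases lt_trichotomy c (4 * (d + 2)) with h | h | h
      · exact h
      · exact absurd hlt (by rw [F_eq_G_of d c hd h]; exact lt_irrefl _)
      · exact absurd hlt (not_lt.mpr (F_lt_G_of d c hd hc h).le)
    · exact G_lt_F_of d c hd hc
end

section
/- Let c > 0 be fixed and define F(d,c) = (1 − d/2) + √((1 − d/2)² + c) and G(d,c) = −d + √(d² + 2c). Then d² · (F(d,c) − G(d,c)) → 2c as the real parameter d → ∞; equivalently, the difference between the two greedy merge-time proposals Δ_{k,C} − Δ^{prev}_{k,C} = (F(d,c) − G(d,c))/2 decays as c/d² + O(d^{-3}). (Lemma 1, part 3: the discrepancy between the proposals decreases at rate d^{-2} with constant proportional to λε_{k−1,C}.) -/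
open Real Filter

/-!
Both proposals have the shape `√(x² + k) - x` (with `x = d/2 - 1, k = c` for `F` and
`x = d, k = 2c` for `G`), and `√(x² + k) - x = k / (2x) + O(x⁻³)`. The leading terms give
`c / (d - 2) - c / d = 2c / (d (d - 2))`, which is `2c / d² + O(d⁻³)`, while the remainders
are `O(d⁻³)`.
-/

noncomputable def sqrtSqAddRemainder (k x : ℝ) : ℝ := √(x ^ 2 + k) - x - k / (2 * x)

lemma sqrtSqAddRemainder_eq {k x : ℝ} (hx : 0 < x) (hxk : 0 ≤ x ^ 2 + k) :
    sqrtSqAddRemainder k x = -(k ^ 2 / (2 * x * (√(x ^ 2 + k) + x) ^ 2)) := by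
  have hS : √(x ^ 2 + k) ^ 2 = x ^ 2 + k := sq_sqrt hxk
  have hpos : 0 < √(x ^ 2 + k) + x := by positivity
  unfold sqrtSqAddRemainder
  generalize √(x ^ 2 + k) = S at hS hpos ⊢
  field_simp
  linear_combination (2 * x * (S + x) - k) * hS

lemma abs_sqrtSqAddRemainder_le {k x : ℝ} (hx : 0 < x) (hxk : 0 ≤ x ^ 2 + k) :
    |sqrtSqAddRemainder k x| ≤ k ^ 2 / (2 * x ^ 3) := by
  rw [sqrtSqAddRemainder_eq hx hxk, abs_neg, abs_of_nonneg (by positivity)]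
  have hx2 : x ^ 2 ≤ (√(x ^ 2 + k) + x) ^ 2 := by
    gcongr
    linarith [sqrt_nonneg (x ^ 2 + k)]
  calc k ^ 2 / (2 * x * (√(x ^ 2 + k) + x) ^ 2) ≤ k ^ 2 / (2 * x * x ^ 2) := by gcongr
    _ = k ^ 2 / (2 * x ^ 3) := by ring

lemma tendsto_sq_mul_sqrtSqAddRemainder (k : ℝ) :
    Tendsto (fun x => x ^ 2 * sqrtSqAddRemainder k x) atTop (nhds 0) := by
  have hbound : Tendsto (fun x : ℝ => k ^ 2 / 2 * x⁻¹) atTop (nhds 0) := by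
    simpa only [mul_zero] using (tendsto_inv_atTop_zero (𝕜 := ℝ)).const_mul (k ^ 2 / 2)
  refine squeeze_zero_norm' ?_ hbound
  filter_upwards [eventually_ge_atTop (max 1 |k|)] with x hx
  have hx1 : 1 ≤ x := le_of_max_le_left hx
  have hxk : 0 ≤ x ^ 2 + k := by
    nlinarith [le_of_max_le_right hx, neg_abs_le k]
  have hx0 : 0 < x := by linarith
  calc ‖x ^ 2 * sqrtSqAddRemainder k x‖ = x ^ 2 * |sqrtSqAddRemainder k x| := by
        rw [Real.norm_eq_abs, abs_mul, abs_of_nonneg (sq_nonneg x)]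
    _ ≤ x ^ 2 * (k ^ 2 / (2 * x ^ 3)) := by gcongr; exact abs_sqrtSqAddRemainder_le hx0 hxk
    _ = k ^ 2 / 2 * x⁻¹ := by field_simp

lemma F_eq_sqrtSqAddRemainder (d c : ℝ) :
    F d c = sqrtSqAddRemainder c (d / 2 - 1) + c / (d - 2) := by
  unfold F sqrtSqAddRemainder
  rw [show (1 - d / 2) ^ 2 = (d / 2 - 1) ^ 2 by ring, show 2 * (d / 2 - 1) = d - 2 by ring]
  ring

lemma G_eq_sqrtSqAddRemainder {d : ℝ} (c : ℝ) (hd : d ≠ 0) :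
    G d c = sqrtSqAddRemainder (2 * c) d + c / d := by
  unfold G sqrtSqAddRemainder
  field_simp
  ring

lemma sq_mul_F_sub_G_eq {d : ℝ} (c : ℝ) (hd : 2 < d) :
    d ^ 2 * (F d c - G d c) =
      (d / (d / 2 - 1)) ^ 2 * ((d / 2 - 1) ^ 2 * sqrtSqAddRemainder c (d / 2 - 1))
        - d ^ 2 * sqrtSqAddRemainder (2 * c) d + (2 * c + 4 * c / (d - 2)) := by
  have hd0 : d ≠ 0 := by positivity
  have hd2 : d - 2 ≠ 0 := by linarith
  have ha : d / 2 - 1 ≠ 0 := by linarith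
  rw [F_eq_sqrtSqAddRemainder, G_eq_sqrtSqAddRemainder c hd0]
  field_simp
  ring

lemma tendsto_div_half_sub_one : Tendsto (fun d : ℝ => d / (d / 2 - 1)) atTop (nhds 2) := by
  have h : Tendsto (fun d : ℝ => 2 / (1 - 2 * d⁻¹)) atTop (nhds (2 / (1 - 2 * 0))) :=
    tendsto_const_nhds.div (tendsto_const_nhds.sub (tendsto_inv_atTop_zero.const_mul 2))
      (by norm_num)
  rw [show (2 : ℝ) / (1 - 2 * 0) = 2 by norm_num] at h
  refine h.congr' ?_
  filter_upwards [eventually_gt_atTop 2] with d hd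
  have hd0 : d ≠ 0 := by positivity
  field_simp

theorem diff_decay_general (c : ℝ) :
    Tendsto (fun d : ℝ => d ^ 2 * (F d c - G d c)) atTop (nhds (2 * c)) := by
  have hF : Tendsto (fun d : ℝ => (d / 2 - 1) ^ 2 * sqrtSqAddRemainder c (d / 2 - 1))
      atTop (nhds 0) :=
    (tendsto_sq_mul_sqrtSqAddRemainder c).comp <|
      tendsto_atTop_add_const_right _ _ (tendsto_id.atTop_div_const two_pos)
  have hG := tendsto_sq_mul_sqrtSqAddRemainder (2 * c)
  have hmain : Tendsto (fun d : ℝ => 2 * c + 4 * c / (d - 2)) atTop (nhds (2 * c + 0)) :=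
    tendsto_const_nhds.add <| tendsto_const_nhds.div_atTop <|
      tendsto_atTop_add_const_right _ _ tendsto_id
  have hlim := ((tendsto_div_half_sub_one.pow 2).mul hF).sub hG |>.add hmain
  rw [show (2 : ℝ) ^ 2 * 0 - 0 + (2 * c + 0) = 2 * c by ring] at hlim
  refine hlim.congr' ?_
  filter_upwards [eventually_gt_atTop 2] with d hd
  exact (sq_mul_F_sub_G_eq c hd).symm

/-- Lemma 1, part 3: `d² (F(d,c) − G(d,c)) → 2c` as `d → ∞`, i.e. the discrepancy
between the two greedy merge-time proposals decays as `c / d² + O(d⁻³)`. -/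
theorem diff_decay (c : ℝ) (hc : 0 < c) :
    Tendsto (fun d : ℝ => d ^ 2 * (F d c - G d c)) atTop (nhds (2 * c)) :=
  diff_decay_general c
end
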